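/- Let M and K be symmetric positive definite real n×n matrices (M the mass matrix, K the stiffness matrix) and let α, β, κ > 0 be real parameters. Set A := β M, B := κ K and C := α^{-1} M. Then the first block of the interpolation preconditioner at θ = 1/2 has the explicit form A + [A, Bᵀ C^{-1} B]_{1/2} = β M + (α β)^{1/2} κ K. -/

import Mathlib

/-!
With `X := (αβ)^{1/2} κ K` one has `Bᵀ C⁻¹ B = α κ² K M⁻¹ K = X A⁻¹ X`, so the claim is the
Riccati identity `[V, X V⁻¹ X]_{1/2} = X` for positive semidefinite `X`. This holds because
`V^{-1/2} (X V⁻¹ X) V^{-1/2}` is the square of the positive semidefinite matrix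
`Y := V^{-1/2} X V^{-1/2}`, so its square root is `Y`, and `V^{1/2} Y V^{1/2} = X`.
-/

open Matrix

/-- Real power of a real square matrix, via the continuous functional calculus
(spectral decomposition); junk value if the matrix is not selfadjoint. -/
noncomputable def mrpow {n : ℕ} (S : Matrix (Fin n) (Fin n) ℝ) (r : ℝ) :
    Matrix (Fin n) (Fin n) ℝ :=
  cfc (fun x : ℝ => x ^ r) S

/-- The square root `M^{1/2}`. -/
noncomputable def msqrt {n : ℕ} (S : Matrix (Fin n) (Fin n) ℝ) : Matrix (Fin n) (Fin n) ℝ :=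
  mrpow S (1 / 2)

/-- The interpolation `[V, W]_θ := V^{1/2} (V^{-1/2} W V^{-1/2})^θ V^{1/2}`,
where `V^{-1/2}` is the inverse of `V^{1/2}`. -/
noncomputable def interp {n : ℕ} (V W : Matrix (Fin n) (Fin n) ℝ) (θ : ℝ) :
    Matrix (Fin n) (Fin n) ℝ :=
  msqrt V * mrpow ((msqrt V)⁻¹ * W * (msqrt V)⁻¹) θ * msqrt V

theorem Matrix.inv_smul_of_ne_zero {ι 𝕜 : Type*} [Fintype ι] [DecidableEq ι] [Field 𝕜]
    {S : Matrix ι ι 𝕜} {c : 𝕜} (hc : c ≠ 0) (hS : IsUnit S.det) : (c • S)⁻¹ = c⁻¹ • S⁻¹ :=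
  inv_smul' S (Units.mk0 c hc) hS

open scoped MatrixOrder

section
variable {n : ℕ} {S T : Matrix (Fin n) (Fin n) ℝ}

theorem msqrt_eq_sqrt (hS : S.PosSemidef) : msqrt S = CFC.sqrt S := by
  rw [CFC.sqrt_eq_rpow, CFC.rpow_eq_cfc_real hS.nonneg]
  rfl

theorem posSemidef_msqrt (hS : S.PosSemidef) : (msqrt S).PosSemidef := by
  rw [msqrt_eq_sqrt hS]
  exact (CFC.sqrt_nonneg S).posSemidef

theorem msqrt_mul_msqrt_self (hS : S.PosSemidef) : msqrt S * msqrt S = S := by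
  rw [msqrt_eq_sqrt hS, CFC.sqrt_mul_sqrt_self S hS.nonneg]

theorem msqrt_mul_self (hT : T.PosSemidef) : msqrt (T * T) = T := by
  have hTT : (T * T).PosSemidef := by
    simpa only [hT.isHermitian.eq] using posSemidef_conjTranspose_mul_self T
  rw [msqrt_eq_sqrt hTT, CFC.sqrt_mul_self T hT.nonneg]

theorem isUnit_msqrt (hS : S.PosDef) : IsUnit (msqrt S) :=
  isUnit_of_mul_isUnit_left ((msqrt_mul_msqrt_self hS.posSemidef).symm ▸ hS.isUnit)

theorem interp_half_mul_inv_mul {V X : Matrix (Fin n) (Fin n) ℝ} (hV : V.PosDef)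
    (hX : X.PosSemidef) : interp V (X * V⁻¹ * X) (1 / 2) = X := by
  set R := msqrt V
  have hRdet : IsUnit R.det := (isUnit_iff_isUnit_det R).mp (isUnit_msqrt hV)
  have hRR : R * R = V := msqrt_mul_msqrt_self hV.posSemidef
  have hRinv : (R⁻¹)ᴴ = R⁻¹ := (posSemidef_msqrt hV.posSemidef).isHermitian.inv
  have hY : (R⁻¹ * X * R⁻¹).PosSemidef := by
    simpa only [hRinv] using hX.conjTranspose_mul_mul_same R⁻¹
  have hsquare : R⁻¹ * (X * V⁻¹ * X) * R⁻¹ = (R⁻¹ * X * R⁻¹) * (R⁻¹ * X * R⁻¹) := by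
    rw [← hRR, Matrix.mul_inv_rev]
    simp only [Matrix.mul_assoc]
  rw [interp, hsquare]
  change R * msqrt _ * R = X
  rw [msqrt_mul_self hY]
  simp only [Matrix.mul_assoc, nonsing_inv_mul R hRdet, Matrix.mul_one,
    mul_nonsing_inv_cancel_left R X hRdet]

end

/-- With `A = β M`, `B = κ K`, `C = α⁻¹ M` (for `M`, `K` symmetric positive definite and
`α, β, κ > 0`), the first block of the interpolation preconditioner at `θ = 1/2` is
`A + [A, Bᵀ C⁻¹ B]_{1/2} = β M + (α β)^{1/2} κ K`. -/
theorem first_preconditioner_block {n : ℕ} (M K : Matrix (Fin n) (Fin n) ℝ)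
    (hM : M.PosDef) (hK : K.PosDef) (α β κ : ℝ) (hα : 0 < α) (hβ : 0 < β) (hκ : 0 < κ)
    (A B C : Matrix (Fin n) (Fin n) ℝ)
    (hA : A = β • M) (hB : B = κ • K) (hC : C = α⁻¹ • M) :
    A + interp A (Bᵀ * C⁻¹ * B) (1 / 2) =
      β • M + ((α * β) ^ ((1 : ℝ) / 2) * κ) • K := by
  subst hA hB hC
  have hMdet : IsUnit M.det := (isUnit_iff_isUnit_det M).mp hM.isUnit
  have hsqrt : (α * β) ^ ((1 : ℝ) / 2) * (α * β) ^ ((1 : ℝ) / 2) = α * β := by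
    rw [← Real.sqrt_eq_rpow, Real.mul_self_sqrt (by positivity)]
  have hBCB : (κ • K)ᵀ * (α⁻¹ • M)⁻¹ * (κ • K) =
      (((α * β) ^ ((1 : ℝ) / 2) * κ) • K) * (β • M)⁻¹ *
        (((α * β) ^ ((1 : ℝ) / 2) * κ) • K) := by
    rw [inv_smul_of_ne_zero (inv_ne_zero hα.ne') hMdet, inv_smul_of_ne_zero hβ.ne' hMdet,
      transpose_smul, ← conjTranspose_eq_transpose_of_trivial, hK.isHermitian.eq]
    simp only [Matrix.smul_mul, Matrix.mul_smul, smul_smul]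
    congr 1
    field_simp
    rw [sq, hsqrt]
  rw [hBCB, interp_half_mul_inv_mul (hM.smul hβ) (hK.posSemidef.smul (by positivity))]
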